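/- If the Lovász extension f^L of f: Dⁿ → ℝ is convex, then f is α-bisubmodular, i.e., for all a, b ∈ Dⁿ: f(a∧₀b) + α·f(a∨₀b) + (1-α)·f(a∨₁b) ≤ f(a) + f(b). -/

import Mathlib

open Finset

/-- The three-element domain `D = {-α, 0, 1}`, abstractly. -/
inductive D3 : Type
  | neg : D3
  | zero : D3
  | one : D3
deriving DecidableEq

instance : Fintype D3 :=
  ⟨{D3.neg, D3.zero, D3.one}, by rintro (_ | _ | _) <;> simp⟩

namespace D3

/-- The embedding of `D3` into `ℝ` sending `neg ↦ -α`, `zero ↦ 0`, `one ↦ 1`. -/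
def emb (α : ℝ) : D3 → ℝ
  | neg => -α
  | zero => 0
  | one => 1

/-- The partial order `0 ≺ 1`, `0 ≺ -α`, with `1` and `-α` incomparable. -/
instance : PartialOrder D3 where
  le x y := x = y ∨ x = zero
  le_refl x := Or.inl rfl
  le_trans x y z hxy hyz := by
    rcases hxy with rfl | rfl
    · exact hyz
    · exact Or.inr rfl
  le_antisymm x y hxy hyx := by
    rcases hxy with rfl | rfl
    · rfl
    · rcases hyx with rfl | rfl <;> rfl

/-- `∧₀` : `1 ∧₀ (-α) = (-α) ∧₀ 1 = 0`, and min w.r.t. `≺` otherwise. -/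
def meet0 (x y : D3) : D3 := if x = y then x else zero

/-- `∨₀` : `1 ∨₀ (-α) = (-α) ∨₀ 1 = 0`, and max w.r.t. `≺` otherwise. -/
def join0 (x y : D3) : D3 :=
  if x = y then x else if x = zero then y else if y = zero then x else zero

/-- `∨₁` : `1 ∨₁ (-α) = (-α) ∨₁ 1 = 1`, and max w.r.t. `≺` otherwise. -/
def join1 (x y : D3) : D3 :=
  if x = y then x else if x = zero then y else if y = zero then x else one

end D3

/-- Componentwise `∧₀` on `Dⁿ`. -/
def vmeet0 {n : ℕ} (a b : Fin n → D3) : Fin n → D3 := fun i => D3.meet0 (a i) (b i)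

/-- Componentwise `∨₀` on `Dⁿ`. -/
def vjoin0 {n : ℕ} (a b : Fin n → D3) : Fin n → D3 := fun i => D3.join0 (a i) (b i)

/-- Componentwise `∨₁` on `Dⁿ`. -/
def vjoin1 {n : ℕ} (a b : Fin n → D3) : Fin n → D3 := fun i => D3.join1 (a i) (b i)

/-- `lam` is a probability distribution on `Dⁿ`. -/
def IsDist (n : ℕ) (lam : (Fin n → D3) → ℝ) : Prop :=
  (∀ a, 0 ≤ lam a ∧ lam a ≤ 1) ∧ ∑ a : Fin n → D3, lam a = 1

/-- `lam` has marginal vector `x`, i.e. `Σ_a lam(a)·a = x` in `ℝⁿ`. -/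
def HasMarginal (α : ℝ) (n : ℕ) (lam : (Fin n → D3) → ℝ) (x : Fin n → ℝ) : Prop :=
  ∀ i, ∑ a : Fin n → D3, lam a * D3.emb α (a i) = x i

/-- The support of `lam` forms a chain w.r.t. the componentwise order on `Dⁿ`. -/
def ChainSupp (n : ℕ) (lam : (Fin n → D3) → ℝ) : Prop :=
  ∀ a b : Fin n → D3, lam a ≠ 0 → lam b ≠ 0 → a ≤ b ∨ b ≤ a

/-- The box `[-α,1]ⁿ`. -/
def Box (α : ℝ) (n : ℕ) : Set (Fin n → ℝ) := {x | ∀ i, x i ∈ Set.Icc (-α) 1}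

/-- `f : Dⁿ → ℝ` is α-bisubmodular. -/
def AlphaBisub (α : ℝ) (n : ℕ) (f : (Fin n → D3) → ℝ) : Prop :=
  ∀ a b : Fin n → D3,
    f (vmeet0 a b) + α * f (vjoin0 a b) + (1 - α) * f (vjoin1 a b) ≤ f a + f b

/-- Number of zero coordinates. -/
def zc {n : ℕ} (c : Fin n → D3) : ℕ := (Finset.univ.filter fun i => c i = D3.zero).card

/-- The convex closure `f⁻(x)`. -/
noncomputable def cClos (α : ℝ) (n : ℕ) (f : (Fin n → D3) → ℝ) (x : Fin n → ℝ) : ℝ :=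
  sInf {y | ∃ lam, IsDist n lam ∧ HasMarginal α n lam x ∧ y = ∑ a : Fin n → D3, lam a * f a}

/-!
A chain-supported distribution on `Dⁿ` is determined by its marginal `x`. Indeed `x i` fixes the
masses of the slices `{c | c i = 1}` and `{c | c i = -α}`, one of which is empty on the support;
on a chain the nonzero slices are nested, so the mass of the up-set of any `c` is the smallest
slice mass through `c`, and the masses of all up-sets determine the distribution (Möbius
inversion). Hence `Λ` is the point mass at each vertex `a`, and at the midpoint of `a` and `b` it
is `½ δ(a ∧₀ b) + (α/2) δ(a ∨₀ b) + ((1-α)/2) δ(a ∨₁ b)`, which is supported on the chain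
`a ∧₀ b ≤ a ∨₀ b ≤ a ∨₁ b` and has the right marginal. Midpoint convexity of `f^L` along `[a, b]`
is then exactly the α-bisubmodular inequality.
-/

section UpperMass

variable {β M : Type*} [Fintype β] [PartialOrder β] [AddCommGroup M]

open Classical in
noncomputable def upperMass (μ : β → M) (c : β) : M := ∑ d with c ≤ d, μ d

open Classical in
theorem upperMass_eq_add (μ : β → M) (c : β) :
    upperMass μ c = μ c + ∑ d with c < d, μ d := by
  have : univ.filter (c ≤ ·) = insert c (univ.filter (c < ·)) := by
    ext d; simp [le_iff_eq_or_lt, eq_comm]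
  rw [upperMass, this, sum_insert (by simp)]

theorem eq_of_upperMass_eq {μ ν : β → M} (h : upperMass μ = upperMass ν) : μ = ν := by
  classical
  funext c
  induction c using WellFoundedGT.induction with
  | _ c ih =>
    have hc := congrFun h c
    rw [upperMass_eq_add, upperMass_eq_add,
      sum_congr rfl fun d hd => ih d (by simpa using hd)] at hc
    exact add_right_cancel hc

end UpperMass

namespace D3

theorem le_def {x y : D3} : x ≤ y ↔ x = y ∨ x = zero := Iff.rfl

theorem eq_of_le_of_ne_zero {x y : D3} (h : x ≤ y) (hx : x ≠ zero) : y = x :=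
  (h.resolve_right hx).symm

theorem meet0_le_join0 (x y : D3) : meet0 x y ≤ join0 x y := by
  cases x <;> cases y <;> simp [meet0, join0, le_def]

theorem meet0_le_join1 (x y : D3) : meet0 x y ≤ join1 x y := by
  cases x <;> cases y <;> simp [meet0, join1, le_def]

theorem join0_le_join1 (x y : D3) : join0 x y ≤ join1 x y := by
  cases x <;> cases y <;> simp [join0, join1, le_def]

theorem emb_mem_Icc {α : ℝ} (hα : 0 ≤ α) (x : D3) : emb α x ∈ Set.Icc (-α) 1 := by
  cases x <;> simp only [emb, Set.mem_Icc] <;> constructor <;> linarith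

theorem emb_meet0_add_join (α : ℝ) (x y : D3) :
    emb α (meet0 x y) + α * emb α (join0 x y) + (1 - α) * emb α (join1 x y)
      = emb α x + emb α y := by
  cases x <;> cases y <;> simp [meet0, join0, join1, emb] <;> ring

end D3

section ChainSupp

variable {n : ℕ} {α : ℝ} {μ ν : (Fin n → D3) → ℝ} {x : Fin n → ℝ}

def coordMass (μ : (Fin n → D3) → ℝ) (i : Fin n) (v : D3) : ℝ := ∑ c with c i = v, μ c

noncomputable def coordSupport (μ : (Fin n → D3) → ℝ) (i : Fin n) (v : D3) : Finset (Fin n → D3) :=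
  {c | μ c ≠ 0 ∧ c i = v}

theorem sum_mul_emb_eq_coordMass (α : ℝ) (μ : (Fin n → D3) → ℝ) (i : Fin n) :
    ∑ c, μ c * D3.emb α (c i) = coordMass μ i .one - α * coordMass μ i .neg := by
  simp only [coordMass, sum_filter, mul_sum, ← sum_sub_distrib]
  refine sum_congr rfl fun c _ => ?_
  cases c i <;> simp [D3.emb, mul_comm]

theorem coordMass_nonneg (h0 : ∀ c, 0 ≤ μ c) (i : Fin n) (v : D3) : 0 ≤ coordMass μ i v :=
  sum_nonneg fun c _ => h0 c

theorem coordMass_eq_zero_of_coordSupport_eq_empty {i : Fin n} {v : D3}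
    (h : coordSupport μ i v = ∅) : coordMass μ i v = 0 := by
  refine sum_eq_zero fun c hc => ?_
  by_contra hμc
  have : c ∈ coordSupport μ i v := by simp_all [coordSupport]
  simp [h] at this

theorem ChainSupp.coordSupport_total (hμ : ChainSupp n μ) (i j : Fin n) {v w : D3}
    (hv : v ≠ .zero) (hw : w ≠ .zero) :
    coordSupport μ i v ⊆ coordSupport μ j w ∨ coordSupport μ j w ⊆ coordSupport μ i v := by
  by_contra! h
  obtain ⟨d, hd, hdj⟩ := not_subset.1 h.1
  obtain ⟨e, he, hei⟩ := not_subset.1 h.2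
  simp only [coordSupport, mem_filter, mem_univ, true_and, not_and] at hd hdj he hei
  rcases hμ d e hd.1 he.1 with hde | hed
  · exact hei he.1 ((D3.eq_of_le_of_ne_zero (hde i) (hd.2 ▸ hv)).trans hd.2)
  · exact hdj hd.1 ((D3.eq_of_le_of_ne_zero (hed j) (he.2 ▸ hw)).trans he.2)

theorem ChainSupp.coordMass_one_eq_zero_or (hμ : ChainSupp n μ) (i : Fin n) :
    coordMass μ i .one = 0 ∨ coordMass μ i .neg = 0 := by
  have hdisj : ∀ c, c ∈ coordSupport μ i .one → c ∉ coordSupport μ i .neg := by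
    intro c h1 hn
    simp only [coordSupport, mem_filter] at h1 hn
    exact absurd (h1.2.2.symm.trans hn.2.2) (by decide)
  rcases hμ.coordSupport_total i i (v := .one) (w := .neg) (by decide) (by decide) with h | h
  · exact .inl (coordMass_eq_zero_of_coordSupport_eq_empty
      (eq_empty_of_forall_notMem fun c hc => hdisj c hc (h hc)))
  · exact .inr (coordMass_eq_zero_of_coordSupport_eq_empty
      (eq_empty_of_forall_notMem fun c hc => hdisj c (h hc) hc))

theorem ChainSupp.coordMass_eq_of_hasMarginal (hμ : ChainSupp n μ) (hα : 0 < α)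
    (h0 : ∀ c, 0 ≤ μ c) (hx : HasMarginal α n μ x) (i : Fin n) :
    coordMass μ i .one = max (x i) 0 ∧ α * coordMass μ i .neg = max (-x i) 0 := by
  have hm := hx i
  rw [sum_mul_emb_eq_coordMass] at hm
  have h1 := coordMass_nonneg h0 i .one
  have hn := mul_nonneg hα.le (coordMass_nonneg h0 i .neg)
  rcases hμ.coordMass_one_eq_zero_or i with h | h <;> rw [h] at hm ⊢
  · rw [max_eq_right (by linarith), max_eq_left (by linarith)]
    constructor <;> linarith
  · rw [max_eq_left (by linarith), max_eq_right (by linarith)]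
    constructor <;> linarith

theorem upperMass_eq_sum_of_forall_eq_zero {c : Fin n → D3} (hc : ∀ i, c i = .zero) :
    upperMass μ c = ∑ d, μ d := by
  classical
  exact sum_congr (filter_true_of_mem fun _ _ i => .inr (hc i)) fun _ _ => rfl

theorem upperMass_le_coordMass (h0 : ∀ c, 0 ≤ μ c) {c : Fin n → D3} {i : Fin n}
    (hi : c i ≠ .zero) : upperMass μ c ≤ coordMass μ i (c i) := by
  classical
  exact sum_le_sum_of_subset_of_nonneg
    (fun d hd => by simpa using D3.eq_of_le_of_ne_zero ((mem_filter.1 hd).2 i) hi)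
    fun d _ _ => h0 d

theorem ChainSupp.exists_upperMass_eq_coordMass (hμ : ChainSupp n μ) {c : Fin n → D3}
    (hc : ∃ i, c i ≠ .zero) : ∃ i, c i ≠ .zero ∧ upperMass μ c = coordMass μ i (c i) := by
  obtain ⟨i, hi, hmin⟩ := exists_min_image (univ.filter (c · ≠ .zero))
    (fun j => #(coordSupport μ j (c j))) (hc.imp fun j hj => by simpa using hj)
  replace hi : c i ≠ .zero := (mem_filter.1 hi).2
  have hsub : ∀ j, c j ≠ .zero → coordSupport μ i (c i) ⊆ coordSupport μ j (c j) := by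
    intro j hj
    rcases hμ.coordSupport_total i j hi hj with h | h
    · exact h
    · exact (eq_of_subset_of_card_le h (hmin j (by simpa using hj))).ge
  have hle : ∀ d, μ d ≠ 0 → (c ≤ d ↔ d i = c i) := by
    refine fun d hd => ⟨fun h => D3.eq_of_le_of_ne_zero (h i) hi, fun hdi j => ?_⟩
    by_cases hj : c j = .zero
    · exact .inr hj
    · have := hsub j hj (show d ∈ coordSupport μ i (c i) by simp [coordSupport, hd, hdi])
      exact .inl (mem_filter.1 this).2.2.symm
  refine ⟨i, hi, ?_⟩
  rw [upperMass, coordMass, sum_filter, sum_filter]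
  refine sum_congr rfl fun d _ => ?_
  by_cases hd : μ d = 0
  · simp [hd]
  · simp only [hle d hd]

theorem upperMass_le_of_coordMass_eq (h0 : ∀ c, 0 ≤ μ c) (hν : ChainSupp n ν)
    (hsum : ∑ c, μ c = ∑ c, ν c)
    (hmass : ∀ i v, v ≠ .zero → coordMass μ i v = coordMass ν i v) (c : Fin n → D3) :
    upperMass μ c ≤ upperMass ν c := by
  by_cases hc : ∃ i, c i ≠ .zero
  · obtain ⟨i, hi, hνc⟩ := hν.exists_upperMass_eq_coordMass hc
    calc upperMass μ c ≤ coordMass μ i (c i) := upperMass_le_coordMass h0 hi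
      _ = upperMass ν c := by rw [hmass i _ hi, hνc]
  · push Not at hc
    rw [upperMass_eq_sum_of_forall_eq_zero hc, upperMass_eq_sum_of_forall_eq_zero hc, hsum]

theorem IsDist.eq_of_chainSupp_of_hasMarginal (hα : 0 < α) (hμ : IsDist n μ) (hν : IsDist n ν)
    (hμc : ChainSupp n μ) (hνc : ChainSupp n ν) (hμx : HasMarginal α n μ x)
    (hνx : HasMarginal α n ν x) : μ = ν := by
  have hμ0 : ∀ c, 0 ≤ μ c := fun c => (hμ.1 c).1
  have hν0 : ∀ c, 0 ≤ ν c := fun c => (hν.1 c).1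
  have hmass : ∀ i v, v ≠ .zero → coordMass μ i v = coordMass ν i v := by
    intro i v hv
    obtain ⟨hμ1, hμn⟩ := hμc.coordMass_eq_of_hasMarginal hα hμ0 hμx i
    obtain ⟨hν1, hνn⟩ := hνc.coordMass_eq_of_hasMarginal hα hν0 hνx i
    cases v
    · exact mul_left_cancel₀ hα.ne' (hμn.trans hνn.symm)
    · exact absurd rfl hv
    · exact hμ1.trans hν1.symm
  have hsum : ∑ c, μ c = ∑ c, ν c := hμ.2.trans hν.2.symm
  refine eq_of_upperMass_eq (funext fun c => le_antisymm ?_ ?_)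
  · exact upperMass_le_of_coordMass_eq hμ0 hνc hsum hmass c
  · exact upperMass_le_of_coordMass_eq hν0 hμc hsum.symm (fun i v hv => (hmass i v hv).symm) c

end ChainSupp

section Distributions

variable {n : ℕ} {α : ℝ}

theorem chainSupp_of_isChain {μ : (Fin n → D3) → ℝ} {s : Set (Fin n → D3)}
    (hs : IsChain (· ≤ ·) s) (hμ : ∀ c, μ c ≠ 0 → c ∈ s) : ChainSupp n μ :=
  fun a b ha hb => hs.total (hμ a ha) (hμ b hb)

def dirac (a : Fin n → D3) : (Fin n → D3) → ℝ := Pi.single a 1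

theorem dirac_apply (a c : Fin n → D3) : dirac a c = if c = a then 1 else 0 :=
  Pi.single_apply a 1 c

theorem dirac_mem_Icc (a c : Fin n → D3) : dirac a c ∈ Set.Icc 0 1 := by
  rw [dirac_apply]
  split_ifs <;> simp

theorem sum_dirac_mul (a : Fin n → D3) (g : (Fin n → D3) → ℝ) :
    ∑ c, dirac a c * g c = g a := by
  simp [dirac_apply]

theorem isDist_dirac (a : Fin n → D3) : IsDist n (dirac a) :=
  ⟨dirac_mem_Icc a, by simpa using sum_dirac_mul a 1⟩

theorem hasMarginal_dirac (a : Fin n → D3) : HasMarginal α n (dirac a) (D3.emb α ∘ a) :=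
  fun i => sum_dirac_mul a fun c => D3.emb α (c i)

theorem chainSupp_dirac (a : Fin n → D3) : ChainSupp n (dirac a) :=
  chainSupp_of_isChain (IsChain.singleton (a := a)) fun c hc => by
    by_contra h
    simp_all [dirac_apply]

noncomputable def midpointDist (α : ℝ) (a b : Fin n → D3) : (Fin n → D3) → ℝ :=
  (1 / 2 : ℝ) • dirac (vmeet0 a b) + (α / 2) • dirac (vjoin0 a b)
    + ((1 - α) / 2) • dirac (vjoin1 a b)

theorem sum_midpointDist_mul (a b : Fin n → D3) (g : (Fin n → D3) → ℝ) :
    ∑ c, midpointDist α a b c * g c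
      = (g (vmeet0 a b) + α * g (vjoin0 a b) + (1 - α) * g (vjoin1 a b)) / 2 := by
  simp only [midpointDist, Pi.add_apply, Pi.smul_apply, smul_eq_mul, add_mul, mul_assoc,
    sum_add_distrib, ← mul_sum, sum_dirac_mul]
  ring

theorem isDist_midpointDist (hα : α ∈ Set.Icc 0 1) (a b : Fin n → D3) :
    IsDist n (midpointDist α a b) := by
  refine ⟨fun c => ?_, by simpa using sum_midpointDist_mul (α := α) a b 1⟩
  obtain ⟨h0, h0'⟩ := dirac_mem_Icc (vmeet0 a b) c
  obtain ⟨h1, h1'⟩ := dirac_mem_Icc (vjoin0 a b) c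
  obtain ⟨h2, h2'⟩ := dirac_mem_Icc (vjoin1 a b) c
  simp only [midpointDist, Pi.add_apply, Pi.smul_apply, smul_eq_mul]
  constructor <;> nlinarith [hα.1, hα.2]

theorem hasMarginal_midpointDist (a b : Fin n → D3) :
    HasMarginal α n (midpointDist α a b)
      ((1 / 2 : ℝ) • (D3.emb α ∘ a) + (1 / 2 : ℝ) • (D3.emb α ∘ b)) := by
  intro i
  rw [sum_midpointDist_mul a b fun c => D3.emb α (c i)]
  simp only [vmeet0, vjoin0, vjoin1, D3.emb_meet0_add_join, Pi.add_apply, Pi.smul_apply,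
    Function.comp_apply, smul_eq_mul]
  ring

theorem chainSupp_midpointDist (a b : Fin n → D3) : ChainSupp n (midpointDist α a b) := by
  have hchain : IsChain (· ≤ ·) {vmeet0 a b, vjoin0 a b, vjoin1 a b} :=
    (IsChain.pair fun i => D3.join0_le_join1 (a i) (b i)).insert fun c hc _ => .inl <| by
      rcases hc with rfl | rfl
      exacts [fun i => D3.meet0_le_join0 (a i) (b i), fun i => D3.meet0_le_join1 (a i) (b i)]
  refine chainSupp_of_isChain hchain fun c hc => ?_
  by_contra h
  simp only [Set.mem_insert_iff, Set.mem_singleton_iff, not_or] at h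
  simp [midpointDist, dirac_apply, h.1, h.2.1, h.2.2] at hc

end Distributions

/-- if the Lovász extension is convex then `f` is α-bisubmodular. -/
theorem stmt7 (α : ℝ) (hα : α ∈ Set.Ioc (0 : ℝ) 1) (n : ℕ) (f : (Fin n → D3) → ℝ)
    (Λ : (Fin n → ℝ) → (Fin n → D3) → ℝ)
    (hΛ : ∀ x ∈ Box α n, IsDist n (Λ x) ∧ HasMarginal α n (Λ x) x ∧ ChainSupp n (Λ x))
    (hconv : ConvexOn ℝ (Box α n) fun x => ∑ a : Fin n → D3, Λ x a * f a) :
    AlphaBisub α n f := by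
  obtain ⟨hα0, hα1⟩ := hα
  intro a b
  have hΛ_eq : ∀ x ∈ Box α n, ∀ μ, IsDist n μ → HasMarginal α n μ x → ChainSupp n μ → Λ x = μ :=
    fun x hx μ hμ hμx hμc =>
      (hΛ x hx).1.eq_of_chainSupp_of_hasMarginal hα0 hμ (hΛ x hx).2.2 hμc (hΛ x hx).2.1 hμx
  have hbox (p : Fin n → D3) : D3.emb α ∘ p ∈ Box α n := fun i => D3.emb_mem_Icc hα0.le (p i)
  have hvertex (p : Fin n → D3) : ∑ c, Λ (D3.emb α ∘ p) c * f c = f p := by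
    rw [hΛ_eq _ (hbox p) _ (isDist_dirac p) (hasMarginal_dirac p) (chainSupp_dirac p),
      sum_dirac_mul]
  have hhalf : (0 : ℝ) ≤ 1 / 2 := by norm_num
  have hmid := hconv.2 (hbox a) (hbox b) hhalf hhalf (add_halves 1)
  beta_reduce at hmid
  rw [hΛ_eq _ (hconv.1 (hbox a) (hbox b) hhalf hhalf (add_halves 1)) _
    (isDist_midpointDist ⟨hα0.le, hα1⟩ a b) (hasMarginal_midpointDist a b)
    (chainSupp_midpointDist a b), sum_midpointDist_mul, hvertex, hvertex, smul_eq_mul,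
    smul_eq_mul] at hmid
  linarith
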